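/- In the wide-range regret setting with collection H ⊆ M × F of modification rule–subsequence pairs: for any transcript, R^T_wide ≤ |A| · R^T_{H_wide}, where H_wide := ∪_{(μ,f)∈H} ∪_{j∈A} {(j, φ^{(μ,f)}_j)} with φ^{(μ,f)}_j(t,a) := f(t,a)·1[μ(t,a)=j], so that |H_wide| = |A|·|H|. Consequently there exists an algorithm for the Learner guaranteeing, against any adaptive Adversary, E[R^T_wide] ≤ 4|A|·√(T·(ln|A| + ln|H|)). -/

import Mathlib

/-!
(i) Splitting the wide-range regret of `(μ, f)` according to the value `j = μ(t, a)` writes it as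
the sum over `j ∈ A` of the subsequence regrets of `(j, φ^{(μ,f)}_j)`, each at most `R^T_{H_wide}`.

(ii) Run exponential weights on the pairs of `H` with a fixed-point twist: weight each pair by
`exp (η · its regret so far)` and play a distribution that is stationary for the resulting
weighted chain of swaps `b ↦ μ(t, b)` (it exists by a Cesàro-average/compactness argument).
Stationarity kills the first-order term of the potential `Φ = ∑_p exp (η R_p)`, so `E Φ` grows
by a factor at most `1 + η²` per round; Jensen's inequality for `log` then gives
`E[R] ≤ ηT + ln|H| / η`, and `η = √(ln(|A||H|) / T)` gives `2√(T ln(|A||H|))`. When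
`T < ln(|A||H|)` the trivial bound `T` suffices, and with a single action there is no regret.
-/

open scoped BigOperators

noncomputable section

/-- The prefix of a full transcript `a` before round `t`. -/
def transcriptPrefix {A : Type*} {T : ℕ} (a : Fin T → A) (t : Fin T) : Fin t.1 → A :=
  fun s => a ⟨s.1, s.2.trans t.2⟩

/-- The prefix of a history `h` before its `s`-th entry. -/
def historyPrefix {A : Type*} {m : ℕ} (h : Fin m → A) (s : Fin m) : Fin s.1 → A :=
  fun u => h ⟨u.1, u.2.trans s.2⟩

/-- A learner's algorithm in the experts setting: at round `t` it maps the realized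
history of its actions and the past loss vectors to a distribution over actions. -/
def ExpertStrategy (A : Type) (T : ℕ) : Type :=
  ∀ t : Fin T, (Fin t.1 → A) → (Fin t.1 → A → ℝ) → A → ℝ

/-- The per-round play induced by a strategy `σ` against the adaptive Adversary `r`. -/
noncomputable def playOf {A : Type} {T : ℕ} (σ : ExpertStrategy A T)
    (r : ∀ t : Fin T, (Fin t.1 → A) → A → ℝ)
    (t : Fin T) (h : Fin t.1 → A) : A → ℝ :=
  σ t h (fun s => r ⟨s.1, s.2.trans t.2⟩ (historyPrefix h s))

/-- The probability of a full transcript `a` when the Learner plays the per-round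
distributions `x`. -/
noncomputable def transcriptProb {A : Type} [Fintype A] {T : ℕ}
    (x : ∀ t : Fin T, (Fin t.1 → A) → A → ℝ) (a : Fin T → A) : ℝ :=
  ∏ t, x t (transcriptPrefix a t) (a t)

open Finset Matrix

open Filter Topology in
theorem ContinuousLinearMap.exists_fixedPoint_of_mapsTo {E : Type*} [NormedAddCommGroup E]
    [NormedSpace ℝ E] (L : E →L[ℝ] E) {K : Set E} (hK : IsCompact K) (hKc : Convex ℝ K)
    (hne : K.Nonempty) (hL : Set.MapsTo L K K) : ∃ x ∈ K, L x = x := by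
  obtain ⟨x₀, hx₀⟩ := hne
  obtain ⟨R, hR⟩ := hK.isBounded.exists_norm_le
  set u : ℕ → E := fun k => L^[k] x₀
  have hu : ∀ k, u k ∈ K := fun k => hL.iterate k hx₀
  -- Cesàro averages of the orbit of `x₀`: `L` moves them by `O(1/n)`.
  set v : ℕ → E := fun n => ((n : ℝ) + 1)⁻¹ • ∑ k ∈ range (n + 1), u k
  have hv : ∀ n, v n ∈ K := fun n => by
    simpa [v, Finset.smul_sum] using hKc.sum_mem (t := range (n + 1))
      (w := fun _ => ((n : ℝ) + 1)⁻¹) (fun _ _ => by positivity)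
      (by simp; field_simp) fun k _ => hu k
  have hLv : ∀ n, L (v n) - v n = ((n : ℝ) + 1)⁻¹ • (u (n + 1) - u 0) := fun n => by
    have hLu : ∀ k, L (u k) = u (k + 1) := fun k => (Function.iterate_succ_apply' L k x₀).symm
    simp only [v, map_smul, map_sum, hLu, ← smul_sub, ← Finset.sum_sub_distrib,
      Finset.sum_range_sub]
  have hdrift : Tendsto (fun n => L (v n) - v n) atTop (𝓝 0) := by
    refine squeeze_zero_norm (fun n => ?_) (by
      simpa using (tendsto_one_div_add_atTop_nhds_zero_nat (𝕜 := ℝ)).const_mul (R + R))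
    rw [hLv, norm_smul, Real.norm_of_nonneg (by positivity), mul_comm]
    gcongr
    exact (norm_sub_le _ _).trans (add_le_add (hR _ (hu _)) (hR _ (hu _)))
  obtain ⟨x, hx, φ, hφ, hlim⟩ := hK.tendsto_subseq hv
  refine ⟨x, hx, sub_eq_zero.1 (tendsto_nhds_unique ?_ (hdrift.comp hφ.tendsto_atTop))⟩
  exact ((L.continuous.tendsto x).comp hlim).sub hlim

theorem Matrix.exists_vecMul_eq_self_of_mem_rowStochastic {n : Type*} [Fintype n]
    [DecidableEq n] [Nonempty n] {P : Matrix n n ℝ} (hP : P ∈ rowStochastic ℝ n) :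
    ∃ x ∈ stdSimplex ℝ n, x ᵥ* P = x := by
  refine (LinearMap.toContinuousLinearMap (vecMulLinear P)).exists_fixedPoint_of_mapsTo
    (isCompact_stdSimplex ℝ n) (convex_stdSimplex ℝ n)
    ⟨_, single_mem_stdSimplex ℝ (Classical.arbitrary n)⟩ fun x hx => ?_
  refine ⟨nonneg_vecMul_of_mem_rowStochastic hP hx.1, ?_⟩
  simpa [dotProduct] using vecMul_dotProduct_one_eq_one_rowStochastic hP (x := x)
    (by simpa [dotProduct] using hx.2)

theorem Matrix.exists_mem_stdSimplex_inflow_eq_outflow {n : Type*} [Fintype n]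
    [DecidableEq n] [Nonempty n] (M : Matrix n n ℝ) (hM : ∀ i j, 0 ≤ M i j) :
    ∃ x ∈ stdSimplex ℝ n, ∀ a, ∑ b, x b * M b a = x a * ∑ j, M a j := by
  set S : n → ℝ := fun a => ∑ j, M a j
  have hS : ∀ a, 0 ≤ S a := fun a => sum_nonneg fun j _ => hM a j
  set C : ℝ := ∑ a, S a + 1
  have hC : 0 < C := by linarith [sum_nonneg fun a (_ : a ∈ univ) => hS a]
  have hSC : ∀ a, S a ≤ C := fun a => by
    linarith [single_le_sum (fun b _ => hS b) (mem_univ a)]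
  -- `x ᵥ* P = x` is exactly the balance condition
  set P : Matrix n n ℝ := 1 + C⁻¹ • (M - diagonal S)
  have hP : P ∈ rowStochastic ℝ n := by
    refine mem_rowStochastic_iff_sum.2 ⟨fun a b => ?_, fun a => ?_⟩
    · rcases eq_or_ne a b with rfl | hab
      · simp only [P, add_apply, one_apply_eq, smul_apply, sub_apply, diagonal_apply_eq,
          smul_eq_mul]
        have := hM a a
        have : C⁻¹ * S a ≤ 1 := by rw [inv_mul_le_iff₀ hC]; linarith [hSC a]
        nlinarith [inv_pos.2 hC]
      · simp [P, one_apply_ne hab, diagonal_apply_ne _ hab]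
        exact mul_nonneg (inv_pos.2 hC).le (hM a b)
    · simp [P, sum_add_distrib, ← mul_sum, sum_sub_distrib, S, one_apply, diagonal_apply]
  obtain ⟨x, hx, hfix⟩ := exists_vecMul_eq_self_of_mem_rowStochastic hP
  refine ⟨x, hx, fun a => ?_⟩
  have := congrFun hfix a
  simp only [P, vecMul_add, vecMul_one, vecMul_smul, vecMul_sub, Pi.add_apply, Pi.smul_apply,
    Pi.sub_apply, vecMul_diagonal, smul_eq_mul, add_eq_left, mul_eq_zero, inv_eq_zero,
    hC.ne', false_or, sub_eq_zero] at this
  simpa [vecMul, dotProduct] using this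

theorem Matrix.sum_mul_sum_mul_sub_eq_zero {n : Type*} [Fintype n] {M : Matrix n n ℝ}
    {x : n → ℝ} (hx : ∀ a, ∑ b, x b * M b a = x a * ∑ j, M a j) (ℓ : n → ℝ) :
    ∑ b, x b * ∑ j, M b j * (ℓ b - ℓ j) = 0 := by
  have hin : ∑ b, ∑ j, x b * M b j * ℓ j = ∑ b, x b * (∑ j, M b j) * ℓ b := by
    rw [sum_comm]
    exact sum_congr rfl fun j _ => by rw [← sum_mul, hx j]
  simp only [mul_sub, sum_sub_distrib, mul_sum, ← mul_assoc, sum_mul] at hin ⊢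
  rw [hin, sub_self]

def swapMatrix {n ι : Type*} [DecidableEq n] (H : Finset ι) (w : ι → ℝ) (f : ι → n → ℝ)
    (g : ι → n → n) : Matrix n n ℝ :=
  fun b j => ∑ p ∈ H, w p * f p b * if g p b = j then 1 else 0

section swapMatrix

variable {n ι : Type*} [DecidableEq n] (H : Finset ι) (g : ι → n → n)

lemma swapMatrix_nonneg {w : ι → ℝ} {f : ι → n → ℝ} (hw : ∀ p, 0 ≤ w p)
    (hf : ∀ p b, 0 ≤ f p b) (b j : n) : 0 ≤ swapMatrix H w f g b j :=
  sum_nonneg fun p _ => mul_nonneg (mul_nonneg (hw p) (hf p b)) (by split_ifs <;> norm_num)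

lemma sum_swapMatrix_mul_sub [Fintype n] (w : ι → ℝ) (f : ι → n → ℝ) (ℓ : n → ℝ) (b : n) :
    ∑ j, swapMatrix H w f g b j * (ℓ b - ℓ j) = ∑ p ∈ H, w p * (f p b * (ℓ b - ℓ (g p b))) := by
  simp only [swapMatrix, sum_mul, mul_assoc, ite_mul, one_mul, zero_mul]
  rw [sum_comm]
  simp

end swapMatrix

lemma sum_mul_sum_mul_exp_le {n ι : Type*} [Fintype n] (H : Finset ι) {x : n → ℝ}
    (hx : x ∈ stdSimplex ℝ n) {w : ι → ℝ} (hw : ∀ p, 0 ≤ w p) {d : n → ι → ℝ}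
    (hd : ∀ b p, |d b p| ≤ 1) {η : ℝ} (hη₀ : 0 ≤ η) (hη₁ : η ≤ 1)
    (hdrift : ∑ b, x b * ∑ p ∈ H, w p * d b p = 0) :
    ∑ b, x b * ∑ p ∈ H, w p * Real.exp (η * d b p) ≤ (1 + η ^ 2) * ∑ p ∈ H, w p := by
  have hexp : ∀ b p, Real.exp (η * d b p) ≤ 1 + η ^ 2 + η * d b p := fun b p => by
    have hηd : |η * d b p| ≤ 1 := by
      rw [abs_mul, abs_of_nonneg hη₀]; exact mul_le_one₀ hη₁ (abs_nonneg _) (hd b p)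
    have hsq : (η * d b p) ^ 2 ≤ η ^ 2 := by
      rw [mul_pow, ← sq_abs (d b p)]
      exact mul_le_of_le_one_right (sq_nonneg η) (pow_le_one₀ (abs_nonneg _) (hd b p))
    linarith [(abs_le.1 (Real.abs_exp_sub_one_sub_id_le hηd)).2]
  calc ∑ b, x b * ∑ p ∈ H, w p * Real.exp (η * d b p)
      ≤ ∑ b, x b * ∑ p ∈ H, w p * (1 + η ^ 2 + η * d b p) := by
        gcongr with b _ p
        exacts [hx.1 b, hw p, hexp b p]
    _ = ∑ b, x b * ((1 + η ^ 2) * ∑ p ∈ H, w p + η * ∑ p ∈ H, w p * d b p) := by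
        refine sum_congr rfl fun b _ => congrArg _ ?_
        rw [mul_sum, mul_sum, ← sum_add_distrib]
        exact sum_congr rfl fun p _ => by ring
    _ = ∑ b, ((1 + η ^ 2) * (∑ p ∈ H, w p) * x b + η * (x b * ∑ p ∈ H, w p * d b p)) :=
        sum_congr rfl fun b _ => by ring
    _ = (1 + η ^ 2) * ∑ p ∈ H, w p := by
        rw [sum_add_distrib, ← mul_sum, ← mul_sum, hx.2, hdrift]; ring

section Transcripts

variable {A : Type} {n : ℕ}

lemma historyPrefix_snoc_castSucc (h : Fin n → A) (b : A) (s : Fin n) :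
    historyPrefix (Fin.snoc h b : Fin (n + 1) → A) s.castSucc = historyPrefix h s :=
  funext fun u => Fin.snoc_castSucc (α := fun _ => A) b h ⟨u, u.2.trans s.2⟩

lemma historyPrefix_snoc_last (h : Fin n → A) (b : A) :
    historyPrefix (Fin.snoc h b : Fin (n + 1) → A) (Fin.last n) = h :=
  funext fun u => Fin.snoc_castSucc (α := fun _ => A) b h u

variable [Fintype A]

lemma transcriptProb_snoc (x : ∀ t : Fin (n + 1), (Fin t.1 → A) → A → ℝ) (h : Fin n → A)
    (b : A) :
    transcriptProb x (Fin.snoc h b) =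
      transcriptProb (fun t => x t.castSucc) h * x (Fin.last n) h b := by
  rw [transcriptProb, Fin.prod_univ_castSucc]
  congr 1
  · exact prod_congr rfl fun t _ =>
      congrArg₂ (x t.castSucc) (historyPrefix_snoc_castSucc h b t) (Fin.snoc_castSucc ..)
  · exact congrArg₂ (x (Fin.last n)) (historyPrefix_snoc_last h b) (Fin.snoc_last ..)

lemma sum_transcriptProb_mul_succ (x : ∀ t : Fin (n + 1), (Fin t.1 → A) → A → ℝ)
    (g : (Fin (n + 1) → A) → ℝ) :
    ∑ a, transcriptProb x a * g a =
      ∑ h, transcriptProb (fun t => x t.castSucc) h *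
        ∑ b, x (Fin.last n) h b * g (Fin.snoc h b) := by
  rw [← (Fin.snocEquiv fun _ => A).sum_comp, Fintype.sum_prod_type, sum_comm]
  refine sum_congr rfl fun h _ => ?_
  rw [mul_sum]
  refine sum_congr rfl fun b _ => ?_
  change transcriptProb x (Fin.snoc h b) * g (Fin.snoc h b) = _
  rw [transcriptProb_snoc]
  ring

lemma sum_transcriptProb (x : ∀ t : Fin n, (Fin t.1 → A) → A → ℝ)
    (hx : ∀ t h, ∑ b, x t h b = 1) : ∑ a, transcriptProb x a = 1 := by
  induction n with
  | zero => simp [transcriptProb]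
  | succ n ih =>
    simpa [hx, ih _ fun t => hx t.castSucc] using sum_transcriptProb_mul_succ x 1

lemma transcriptProb_nonneg {x : ∀ t : Fin n, (Fin t.1 → A) → A → ℝ}
    (hx : ∀ t h b, 0 ≤ x t h b) (a : Fin n → A) : 0 ≤ transcriptProb x a :=
  prod_nonneg fun _ _ => hx _ _ _

lemma sum_transcriptProb_mul_le_pow {x : ∀ t : Fin n, (Fin t.1 → A) → A → ℝ}
    (hx : ∀ t h b, 0 ≤ x t h b) (Φ : ∀ m ≤ n, (Fin m → A) → ℝ) {K : ℝ} (hK : 0 ≤ K)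
    (hΦ : ∀ t h, ∑ b, x t h b * Φ (t + 1) t.2 (Fin.snoc h b) ≤ K * Φ t t.2.le h) :
    ∑ a, transcriptProb x a * Φ n le_rfl a ≤ K ^ n * Φ 0 n.zero_le default := by
  induction n with
  | zero => simp [transcriptProb, Subsingleton.elim _ (default : Fin 0 → A)]
  | succ n ih =>
    have hx' : ∀ (t : Fin n) h b, 0 ≤ x t.castSucc h b := fun t => hx t.castSucc
    calc ∑ a, transcriptProb x a * Φ (n + 1) le_rfl a
        = ∑ h, transcriptProb (fun t => x t.castSucc) h *
            ∑ b, x (Fin.last n) h b * Φ (n + 1) le_rfl (Fin.snoc h b) :=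
          sum_transcriptProb_mul_succ x _
      _ ≤ ∑ h, transcriptProb (fun t => x t.castSucc) h * (K * Φ n n.le_succ h) := by
          gcongr with h
          exacts [transcriptProb_nonneg hx' h, hΦ (Fin.last n) h]
      _ = K * ∑ h, transcriptProb (fun t => x t.castSucc) h * Φ n n.le_succ h := by
          rw [mul_sum]; exact sum_congr rfl fun h _ => by ring
      _ ≤ K * (K ^ n * Φ 0 n.succ.zero_le default) := by
          gcongr
          exact ih hx' (fun m hm => Φ m (hm.trans n.le_succ)) fun t h => hΦ t.castSucc h
      _ = K ^ (n + 1) * Φ 0 n.succ.zero_le default := by ring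

end Transcripts

lemma abs_mul_sub_le_one {x y z : ℝ} (hx : x ∈ Set.Icc (0 : ℝ) 1) (hy : y ∈ Set.Icc (0 : ℝ) 1)
    (hz : z ∈ Set.Icc (0 : ℝ) 1) : |x * (y - z)| ≤ 1 := by
  rw [abs_mul, abs_of_nonneg hx.1]
  exact mul_le_one₀ hx.2 (abs_nonneg _) (abs_sub_le_iff.2 ⟨by linarith [hy.2, hz.1],
    by linarith [hy.1, hz.2]⟩)

lemma sqrt_div_mul_add_div_sqrt_div {T L : ℝ} (hT : 0 < T) (hL : 0 ≤ L) :
    √(L / T) * T + L / √(L / T) = 2 * √(T * L) := by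
  rcases hL.eq_or_lt with rfl | hL
  · simp
  have hη : 0 < √(L / T) := Real.sqrt_pos.2 (div_pos hL hT)
  have hsq : √(L / T) ^ 2 = L / T := Real.sq_sqrt (div_pos hL hT).le
  have hTL : √(T * L) = √(L / T) * T := by
    rw [← Real.sqrt_sq (by positivity : 0 ≤ √(L / T) * T), mul_pow, hsq]
    congr 1; field_simp
  rw [hTL]
  field_simp
  rw [hsq]
  field_simp
  ring

section WideRange

variable {A ιM ιF : Type} {T : ℕ} (μf : ιM → Fin T → A → A) (fv : ιF → Fin T → A → ℝ)
  (H : Finset (ιM × ιF)) (hH : H.Nonempty)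

def wideRegret (ℓ : Fin T → A → ℝ) (a : Fin T → A) : ℝ :=
  H.sup' hH fun p => ∑ t, fv p.2 t (a t) * (ℓ t (a t) - ℓ t (μf p.1 t (a t)))

/-- `R^T_{H'}` for `H' = {(j q, φ q) | q ∈ S}`. -/
def subsequenceRegret {κ : Type} (S : Finset κ) (hS : S.Nonempty) (j : κ → A)
    (φ : κ → Fin T → A → ℝ) (ℓ : Fin T → A → ℝ) (a : Fin T → A) : ℝ :=
  S.sup' hS fun q => ∑ t, φ q t (a t) * (ℓ t (a t) - ℓ t (j q))

/-- The weight `φ^{(μ,f)}_j` of the pair `q = ((μ, f), j)` of `H_wide`. -/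
def wideWeight [DecidableEq A] (q : (ιM × ιF) × A) (t : Fin T) (b : A) : ℝ :=
  fv q.1.2 t b * if μf q.1.1 t b = q.2 then 1 else 0

theorem wideRegret_le_card_mul_subsequenceRegret [Fintype A] [Nonempty A] [DecidableEq A]
    (ℓ : Fin T → A → ℝ) (a : Fin T → A) :
    wideRegret μf fv H hH ℓ a ≤ Fintype.card A *
      subsequenceRegret (H ×ˢ univ) (hH.product univ_nonempty) Prod.snd (wideWeight μf fv) ℓ a := by
  refine sup'_le _ _ fun p hp => ?_
  have hsplit : ∑ t, fv p.2 t (a t) * (ℓ t (a t) - ℓ t (μf p.1 t (a t))) =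
      ∑ j, ∑ t, wideWeight μf fv (p, j) t (a t) * (ℓ t (a t) - ℓ t j) := by
    rw [sum_comm]
    simp [wideWeight]
  rw [hsplit, ← nsmul_eq_mul, ← card_univ, ← sum_const]
  exact sum_le_sum fun j _ => le_sup' (fun q : (ιM × ιF) × A =>
    ∑ t, wideWeight μf fv q t (a t) * (ℓ t (a t) - ℓ t q.2)) (mk_mem_product hp (mem_univ j))

lemma wideRegret_le_horizon (hfv : ∀ k t b, fv k t b ∈ Set.Icc (0 : ℝ) 1)
    {ℓ : Fin T → A → ℝ} (hℓ : ∀ t j, ℓ t j ∈ Set.Icc (0 : ℝ) 1) (a : Fin T → A) :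
    wideRegret μf fv H hH ℓ a ≤ T :=
  sup'_le _ _ fun p _ => (sum_le_sum fun t _ =>
    (le_abs_self _).trans (abs_mul_sub_le_one (hfv _ _ _) (hℓ _ _) (hℓ _ _))).trans (by simp)

lemma wideRegret_of_subsingleton [Subsingleton A] (ℓ : Fin T → A → ℝ) (a : Fin T → A) :
    wideRegret μf fv H hH ℓ a = 0 := by
  have hμ : ∀ p t, μf p t (a t) = a t := fun _ _ => Subsingleton.elim _ _
  simp [wideRegret, hμ]

variable [Fintype A]

def expectedWideRegret (σ : ExpertStrategy A T) (r : ∀ t : Fin T, (Fin t.1 → A) → A → ℝ) : ℝ :=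
  ∑ a, transcriptProb (playOf σ r) a * wideRegret μf fv H hH (fun t => r t (transcriptPrefix a t)) a

lemma expectedWideRegret_le_horizon (hfv : ∀ k t b, fv k t b ∈ Set.Icc (0 : ℝ) 1)
    {σ : ExpertStrategy A T} (hσ : ∀ t h ℓ, σ t h ℓ ∈ stdSimplex ℝ A)
    {r : ∀ t : Fin T, (Fin t.1 → A) → A → ℝ} (hr : ∀ t h j, r t h j ∈ Set.Icc (0 : ℝ) 1) :
    expectedWideRegret μf fv H hH σ r ≤ T := by
  calc expectedWideRegret μf fv H hH σ r ≤ ∑ a, transcriptProb (playOf σ r) a * T :=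
        sum_le_sum fun a _ => mul_le_mul_of_nonneg_left (wideRegret_le_horizon μf fv H hH hfv
          (fun t => hr t _) a) (transcriptProb_nonneg (fun t h => (hσ t h _).1) a)
    _ = T := by rw [← sum_mul, sum_transcriptProb (playOf σ r) fun t h => (hσ t h _).2, one_mul]

lemma expectedWideRegret_of_subsingleton [Subsingleton A] (σ : ExpertStrategy A T)
    (r : ∀ t : Fin T, (Fin t.1 → A) → A → ℝ) : expectedWideRegret μf fv H hH σ r = 0 := by
  simp [expectedWideRegret, wideRegret_of_subsingleton]

end WideRange

section ExponentialWeights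

variable {A ιM ιF : Type} {T : ℕ} (μf : ιM → Fin T → A → A) (fv : ιF → Fin T → A → ℝ)
  (H : Finset (ιM × ιF))

def cumRegret {m : ℕ} (hm : m ≤ T) (h : Fin m → A) (ℓ : Fin m → A → ℝ) (p : ιM × ιF) : ℝ :=
  ∑ s, fv p.2 (Fin.castLE hm s) (h s) * (ℓ s (h s) - ℓ s (μf p.1 (Fin.castLE hm s) (h s)))

def realizedLosses (r : ∀ t : Fin T, (Fin t.1 → A) → A → ℝ) {m : ℕ} (hm : m ≤ T)
    (h : Fin m → A) : Fin m → A → ℝ :=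
  fun s => r (Fin.castLE hm s) (historyPrefix h s)

def potential (r : ∀ t : Fin T, (Fin t.1 → A) → A → ℝ) (η : ℝ) {m : ℕ} (hm : m ≤ T)
    (h : Fin m → A) : ℝ :=
  ∑ p ∈ H, Real.exp (η * cumRegret μf fv hm h (realizedLosses r hm h) p)

lemma cumRegret_snoc (r : ∀ t : Fin T, (Fin t.1 → A) → A → ℝ) (t : Fin T) (h : Fin t.1 → A)
    (b : A) (p : ιM × ιF) :
    cumRegret μf fv t.2 (Fin.snoc h b) (realizedLosses r t.2 (Fin.snoc h b)) p =
      cumRegret μf fv t.2.le h (realizedLosses r t.2.le h) p +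
        fv p.2 t b * (r t h b - r t h (μf p.1 t b)) := by
  simp only [cumRegret, realizedLosses, Fin.sum_univ_castSucc, Fin.snoc_castSucc, Fin.snoc_last,
    historyPrefix_snoc_castSucc, historyPrefix_snoc_last]
  rfl

lemma potential_zero (r : ∀ t : Fin T, (Fin t.1 → A) → A → ℝ) (η : ℝ) :
    potential μf fv H r η T.zero_le default = H.card := by
  simp [potential, cumRegret]

lemma potential_pos (hH : H.Nonempty) (r : ∀ t : Fin T, (Fin t.1 → A) → A → ℝ) (η : ℝ)
    {m : ℕ} (hm : m ≤ T) (h : Fin m → A) : 0 < potential μf fv H r η hm h :=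
  sum_pos (fun _ _ => Real.exp_pos _) hH

variable (hH : H.Nonempty)

lemma wideRegret_le_log_potential_div {η : ℝ} (hη : 0 < η)
    (r : ∀ t : Fin T, (Fin t.1 → A) → A → ℝ) (a : Fin T → A) :
    wideRegret μf fv H hH (fun t => r t (transcriptPrefix a t)) a ≤
      Real.log (potential μf fv H r η le_rfl a) / η := by
  refine sup'_le _ _ fun p hp => ?_
  rw [le_div_iff₀ hη, mul_comm, Real.le_log_iff_exp_le (potential_pos μf fv H hH r η _ a)]
  exact single_le_sum (f := fun q => Real.exp (η * cumRegret μf fv le_rfl a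
    (realizedLosses r le_rfl a) q)) (fun q _ => (Real.exp_pos _).le) hp

variable [DecidableEq A]

def ewMatrix (η : ℝ) (t : Fin T) (h : Fin t.1 → A) (ℓ : Fin t.1 → A → ℝ) : Matrix A A ℝ :=
  swapMatrix H (fun p => Real.exp (η * cumRegret μf fv t.2.le h ℓ p)) (fun p => fv p.2 t)
    (fun p => μf p.1 t)

lemma ewMatrix_nonneg (hfv : ∀ k t b, 0 ≤ fv k t b) (η : ℝ) (t : Fin T) (h : Fin t.1 → A)
    (ℓ : Fin t.1 → A → ℝ) (b j : A) : 0 ≤ ewMatrix μf fv H η t h ℓ b j :=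
  swapMatrix_nonneg H _ (fun _ => (Real.exp_pos _).le) (fun _ _ => hfv _ t _) b j

variable [Fintype A] [Nonempty A] (hfv : ∀ k t b, fv k t b ∈ Set.Icc (0 : ℝ) 1)

def ewStrategy (η : ℝ) : ExpertStrategy A T :=
  fun t h ℓ => (exists_mem_stdSimplex_inflow_eq_outflow (ewMatrix μf fv H η t h ℓ)
    (ewMatrix_nonneg μf fv H (fun k t b => (hfv k t b).1) η t h ℓ)).choose

lemma ewStrategy_spec (η : ℝ) (t : Fin T) (h : Fin t.1 → A) (ℓ : Fin t.1 → A → ℝ) :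
    ewStrategy μf fv H hfv η t h ℓ ∈ stdSimplex ℝ A ∧
      ∀ a, ∑ b, ewStrategy μf fv H hfv η t h ℓ b * ewMatrix μf fv H η t h ℓ b a =
        ewStrategy μf fv H hfv η t h ℓ a * ∑ j, ewMatrix μf fv H η t h ℓ a j :=
  (exists_mem_stdSimplex_inflow_eq_outflow _
    (ewMatrix_nonneg μf fv H (fun k t b => (hfv k t b).1) η t h ℓ)).choose_spec

lemma potential_ewStrategy_step {r : ∀ t : Fin T, (Fin t.1 → A) → A → ℝ}
    (hr : ∀ t h j, r t h j ∈ Set.Icc (0 : ℝ) 1) {η : ℝ} (hη₀ : 0 ≤ η) (hη₁ : η ≤ 1)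
    (t : Fin T) (h : Fin t.1 → A) :
    ∑ b, playOf (ewStrategy μf fv H hfv η) r t h b * potential μf fv H r η t.2 (Fin.snoc h b) ≤
      (1 + η ^ 2) * potential μf fv H r η t.2.le h := by
  obtain ⟨hx, hflow⟩ := ewStrategy_spec μf fv H hfv η t h (realizedLosses r t.2.le h)
  simp only [potential, cumRegret_snoc, mul_add, Real.exp_add]
  refine sum_mul_sum_mul_exp_le H hx (fun p => (Real.exp_pos _).le)
    (fun b p => abs_mul_sub_le_one (hfv _ _ _) (hr _ _ _) (hr _ _ _)) hη₀ hη₁ ?_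
  refine Eq.trans ?_ (sum_mul_sum_mul_sub_eq_zero hflow (r t h))
  simp only [ewMatrix, sum_swapMatrix_mul_sub]

theorem expectedWideRegret_ewStrategy_le {r : ∀ t : Fin T, (Fin t.1 → A) → A → ℝ}
    (hr : ∀ t h j, r t h j ∈ Set.Icc (0 : ℝ) 1) {η : ℝ} (hη₀ : 0 < η) (hη₁ : η ≤ 1) :
    expectedWideRegret μf fv H hH (ewStrategy μf fv H hfv η) r ≤
      η * T + Real.log H.card / η := by
  set x := playOf (ewStrategy μf fv H hfv η) r
  set Φ := potential μf fv H r η le_rfl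
  have hx : ∀ t h, x t h ∈ stdSimplex ℝ A := fun t h => (ewStrategy_spec μf fv H hfv η t h _).1
  have hprob : ∀ a, 0 ≤ transcriptProb x a := transcriptProb_nonneg fun t h => (hx t h).1
  have hprob1 : ∑ a, transcriptProb x a = 1 := sum_transcriptProb x fun t h => (hx t h).2
  have hΦ : ∑ a, transcriptProb x a * Φ a ≤ (1 + η ^ 2) ^ T * H.card := by
    simpa [potential_zero] using sum_transcriptProb_mul_le_pow (fun t h => (hx t h).1)
      (fun m hm => potential μf fv H r η hm) (by positivity)
      (potential_ewStrategy_step μf fv H hfv hr hη₀.le hη₁)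
  have hΦpos : 0 < ∑ a, transcriptProb x a * Φ a := by
    simpa only [smul_eq_mul, Set.mem_Ioi] using
      (convex_Ioi (0 : ℝ)).sum_mem (fun a _ => hprob a) hprob1 fun a _ =>
        Set.mem_Ioi.2 (potential_pos μf fv H hH r η _ a)
  have hlogΦ : ∑ a, transcriptProb x a * Real.log (Φ a) ≤
      Real.log (∑ a, transcriptProb x a * Φ a) := by
    simpa using strictConcaveOn_log_Ioi.concaveOn.le_map_sum (fun a _ => hprob a) hprob1
      fun a _ => potential_pos μf fv H hH r η _ a
  calc expectedWideRegret μf fv H hH (ewStrategy μf fv H hfv η) r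
      ≤ ∑ a, transcriptProb x a * (Real.log (Φ a) / η) :=
        sum_le_sum fun a _ => mul_le_mul_of_nonneg_left
          (wideRegret_le_log_potential_div μf fv H hH hη₀ r a) (hprob a)
    _ = (∑ a, transcriptProb x a * Real.log (Φ a)) / η := by simp only [sum_div, mul_div_assoc]
    _ ≤ Real.log ((1 + η ^ 2) ^ T * H.card) / η := by
        gcongr
        exact hlogΦ.trans (Real.log_le_log hΦpos hΦ)
    _ = (T * Real.log (1 + η ^ 2) + Real.log H.card) / η := by
        rw [Real.log_mul (by positivity) (by simpa using hH.ne_empty), Real.log_pow]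
    _ ≤ (T * η ^ 2 + Real.log H.card) / η := by
        gcongr
        linarith [Real.log_le_sub_one_of_pos (by positivity : (0 : ℝ) < 1 + η ^ 2)]
    _ = η * T + Real.log H.card / η := by field_simp

theorem expectedWideRegret_ewStrategy_le_two_mul_sqrt {r : ∀ t : Fin T, (Fin t.1 → A) → A → ℝ}
    (hr : ∀ t h j, r t h j ∈ Set.Icc (0 : ℝ) 1) {L : ℝ} (hL : 0 < L)
    (hHL : Real.log H.card ≤ L) :
    expectedWideRegret μf fv H hH (ewStrategy μf fv H hfv √(L / T)) r ≤ 2 * √(T * L) := by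
  rcases le_or_gt L T with hLT | hTL
  · have hT : (0 : ℝ) < T := hL.trans_le hLT
    have hη : 0 < √(L / T) := Real.sqrt_pos.2 (div_pos hL hT)
    calc _ ≤ √(L / T) * T + Real.log H.card / √(L / T) :=
          expectedWideRegret_ewStrategy_le μf fv H hH hfv hr hη
            (Real.sqrt_le_one.2 ((div_le_one hT).2 hLT))
      _ ≤ √(L / T) * T + L / √(L / T) := by gcongr
      _ = 2 * √(T * L) := sqrt_div_mul_add_div_sqrt_div hT hL.le
  · calc _ ≤ (T : ℝ) := expectedWideRegret_le_horizon μf fv H hH hfv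
          (fun t h ℓ => (ewStrategy_spec μf fv H hfv _ t h ℓ).1) hr
      _ ≤ √(T * L) := Real.le_sqrt_of_sq_le (by nlinarith [(Nat.cast_nonneg T : (0 : ℝ) ≤ T)])
      _ ≤ 2 * √(T * L) := by linarith [Real.sqrt_nonneg (T * L)]

end ExponentialWeights

theorem wide_range_regret_bound_general
    (A : Type) [Fintype A] [Nonempty A] [DecidableEq A]
    (ιM ιF : Type) (T : ℕ)
    (μf : ιM → Fin T → A → A)               -- the modification rules M
    (fv : ιF → Fin T → A → ℝ)               -- the subsequence weight functions F
    (hfv : ∀ k t a, fv k t a ∈ Set.Icc (0 : ℝ) 1)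
    (H : Finset (ιM × ιF)) (hH : H.Nonempty) :
    -- (i) pointwise reduction of wide-range regret to subsequence regret over H_wide
    (∀ (a : Fin T → A) (r : Fin T → A → ℝ), (∀ t j, r t j ∈ Set.Icc (0 : ℝ) 1) →
      (H.sup' hH fun p => ∑ t, fv p.2 t (a t) * (r t (a t) - r t (μf p.1 t (a t)))) ≤
        (Fintype.card A) *
          ((H ×ˢ (Finset.univ : Finset A)).sup' (hH.product Finset.univ_nonempty)
            fun q => ∑ t, fv q.1.2 t (a t) * (if μf q.1.1 t (a t) = q.2 then 1 else 0) *
              (r t (a t) - r t q.2))) ∧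
    -- (ii) existence of a no-wide-range-regret algorithm
    (∃ σ : ExpertStrategy A T,
        (∀ t h past, (∀ j, 0 ≤ σ t h past j) ∧ ∑ j, σ t h past j = 1) ∧
        ∀ r : ∀ t : Fin T, (Fin t.1 → A) → A → ℝ,
          (∀ t h j, r t h j ∈ Set.Icc (0 : ℝ) 1) →
          ∑ a : Fin T → A, transcriptProb (playOf σ r) a *
              (H.sup' hH fun p => ∑ t, fv p.2 t (a t) *
                (r t (transcriptPrefix a t) (a t) -
                  r t (transcriptPrefix a t) (μf p.1 t (a t)))) ≤
            4 * (Fintype.card A) *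
              Real.sqrt (T * (Real.log (Fintype.card A) + Real.log H.card))) := by
  refine ⟨fun a r _ => wideRegret_le_card_mul_subsequenceRegret μf fv H hH r a, ?_⟩
  set L := Real.log (Fintype.card A) + Real.log H.card
  refine ⟨ewStrategy μf fv H hfv √(L / T), fun t h ℓ => (ewStrategy_spec μf fv H hfv _ t h ℓ).1,
    fun r hr => ?_⟩
  rcases subsingleton_or_nontrivial A with hA | hA
  · exact (expectedWideRegret_of_subsingleton μf fv H hH _ r).le.trans (by positivity)
  have hL : 0 < L := add_pos_of_pos_of_nonneg
    (Real.log_pos (by exact_mod_cast Fintype.one_lt_card)) (Real.log_natCast_nonneg _)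
  have hA1 : (1 : ℝ) ≤ Fintype.card A := by exact_mod_cast Fintype.card_pos
  calc _ ≤ 2 * √(T * L) := expectedWideRegret_ewStrategy_le_two_mul_sqrt μf fv H hH hfv hr hL
        (le_add_of_nonneg_left (Real.log_natCast_nonneg _))
    _ ≤ 4 * (Fintype.card A) * √(T * L) := by gcongr; linarith

/-- In the wide-range regret setting with modification rules `μf`
(indexed by `ιM`), subsequence weights `fv` (indexed by `ιF`) and a collection
`H ⊆ M × F`: (i) for any transcript, `R^T_wide ≤ |A| · R^T_{H_wide}`, where `H_wide`
consists of the pairs `(j, φ^{(μ,f)}_j)` with `φ^{(μ,f)}_j(t,a) = f(t,a)·1[μ(t,a)=j]`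
for `(μ,f) ∈ H` and `j ∈ A`; (ii) consequently there exists an algorithm for the Learner
guaranteeing, against any adaptive Adversary,
`E[R^T_wide] ≤ 4|A|√(T(ln|A| + ln|H|))`. -/
theorem wide_range_regret_bound
    (A : Type) [Fintype A] [Nonempty A] [DecidableEq A]
    (ιM ιF : Type) [Fintype ιM] [Fintype ιF] (T : ℕ)
    (μf : ιM → Fin T → A → A)               -- the modification rules M
    (fv : ιF → Fin T → A → ℝ)               -- the subsequence weight functions F
    (hfv : ∀ k t a, fv k t a ∈ Set.Icc (0 : ℝ) 1)
    (H : Finset (ιM × ιF)) (hH : H.Nonempty) :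
    -- (i) pointwise reduction of wide-range regret to subsequence regret over H_wide
    (∀ (a : Fin T → A) (r : Fin T → A → ℝ), (∀ t j, r t j ∈ Set.Icc (0 : ℝ) 1) →
      (H.sup' hH fun p => ∑ t, fv p.2 t (a t) * (r t (a t) - r t (μf p.1 t (a t)))) ≤
        (Fintype.card A) *
          ((H ×ˢ (Finset.univ : Finset A)).sup' (hH.product Finset.univ_nonempty)
            fun q => ∑ t, fv q.1.2 t (a t) * (if μf q.1.1 t (a t) = q.2 then 1 else 0) *
              (r t (a t) - r t q.2))) ∧
    -- (ii) existence of a no-wide-range-regret algorithm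
    (∃ σ : ExpertStrategy A T,
        (∀ t h past, (∀ j, 0 ≤ σ t h past j) ∧ ∑ j, σ t h past j = 1) ∧
        ∀ r : ∀ t : Fin T, (Fin t.1 → A) → A → ℝ,
          (∀ t h j, r t h j ∈ Set.Icc (0 : ℝ) 1) →
          ∑ a : Fin T → A, transcriptProb (playOf σ r) a *
              (H.sup' hH fun p => ∑ t, fv p.2 t (a t) *
                (r t (transcriptPrefix a t) (a t) -
                  r t (transcriptPrefix a t) (μf p.1 t (a t)))) ≤
            4 * (Fintype.card A) *
              Real.sqrt (T * (Real.log (Fintype.card A) + Real.log H.card))) :=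
  wide_range_regret_bound_general A ιM ιF T μf fv hfv H hH

end
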